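/- The Smolin state is invariant under exchanging its second and third tensor factors: U ρ_S U† = ρ_S, where U is the unitary on (ℂ²)^{⊗4} swapping factors 2 and 3. Equivalently, (1/4) Σ_{i=1}^4 B^i_{A1B1} ⊗ B^i_{A2B2} = (1/4) Σ_{i=1}^4 B^i_{A1A2} ⊗ B^i_{B1B2}, exhibiting the Smolin state as separable across the bipartition A1A2 : B1B2. -/

import Mathlib

/-!
Statement 5: The Smolin state `ρ_S = (1/4) Σᵢ P_i ⊗ P_i` on `(ℂ²)^{⊗4}` (tensor factors
ordered A1, B1, A2, B2) is invariant under the unitary `U` swapping the second and third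
tensor factors: `U ρ_S U† = ρ_S`.  Equivalently,
`(1/4) Σᵢ Bⁱ_{A1B1} ⊗ Bⁱ_{A2B2} = (1/4) Σᵢ Bⁱ_{A1A2} ⊗ Bⁱ_{B1B2}`.
-/

noncomputable section
open Matrix
open scoped Kronecker

/-- The two-qubit index set. -/
abbrev TwoQ : Type := Fin 2 × Fin 2

/-- Inverse square root of 2 in `ℂ`. -/
def c2 : ℂ := ((Real.sqrt 2 : ℂ))⁻¹

/-- The standard basis vectors of `ℂ²` as plain functions. -/
def e (a : Fin 2) : Fin 2 → ℂ := fun b => if b = a then 1 else 0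

/-- Tensor product of coordinate vectors. -/
def tpv {ι κ : Type} (x : ι → ℂ) (y : κ → ℂ) : ι × κ → ℂ := fun p => x p.1 * y p.2

/-- The four Bell states `B¹ = (|00⟩+|11⟩)/√2`, `B² = (|00⟩−|11⟩)/√2`,
`B³ = (|01⟩+|10⟩)/√2`, `B⁴ = (|01⟩−|10⟩)/√2`. -/
def bell : Fin 4 → (TwoQ → ℂ) :=
  ![c2 • (tpv (e 0) (e 0) + tpv (e 1) (e 1)),
    c2 • (tpv (e 0) (e 0) - tpv (e 1) (e 1)),
    c2 • (tpv (e 0) (e 1) + tpv (e 1) (e 0)),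
    c2 • (tpv (e 0) (e 1) - tpv (e 1) (e 0))]

/-- The rank-one projection `P_i = |Bⁱ⟩⟨Bⁱ|` as a matrix. -/
def bellProj (i : Fin 4) : Matrix TwoQ TwoQ ℂ :=
  Matrix.of fun a b => bell i a * star (bell i b)

/-- The Smolin state `ρ_S = (1/4) Σᵢ P_i ⊗ P_i`, the first copy acting on the
factors `(A1, B1)` and the second on `(A2, B2)`. -/
def smolin : Matrix (TwoQ × TwoQ) (TwoQ × TwoQ) ℂ :=
  (1 / 4 : ℂ) • ∑ i : Fin 4, bellProj i ⊗ₖ bellProj i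

/-- Exchange of the second and third tensor factors of `(ℂ²)^{⊗4}`:
`((a1, b1), (a2, b2)) ↦ ((a1, a2), (b1, b2))` on the index set. -/
def swap23 : (TwoQ × TwoQ) ≃ (TwoQ × TwoQ) where
  toFun p := ((p.1.1, p.2.1), (p.1.2, p.2.2))
  invFun p := ((p.1.1, p.2.1), (p.1.2, p.2.2))
  left_inv p := rfl
  right_inv p := rfl

/-- The unitary permutation matrix implementing `swap23`. -/
def U : Matrix (TwoQ × TwoQ) (TwoQ × TwoQ) ℂ :=
  Matrix.of fun p q => if p = swap23 q then 1 else 0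

/-!
All Bell amplitudes are `0` or `±1/√2`, so `16 ρ_S` has an integer entry table built from the
signs of the Bell states; invariance of that table under relabelling the factors is a finite
check. Conjugation by the permutation matrix `U` is exactly this relabelling.
-/

theorem Matrix.permMatrix_mul_mul_conjTranspose_permMatrix {n R : Type*} [Fintype n]
    [DecidableEq n] [NonAssocSemiring R] [StarRing R] (σ : Equiv.Perm n) (M : Matrix n n R) :
    σ.permMatrix R * M * (σ.permMatrix R)ᴴ = M.submatrix σ σ := by
  rw [conjTranspose_permMatrix, PEquiv.toMatrix_toPEquiv_mul, PEquiv.mul_toMatrix_toPEquiv,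
    submatrix_submatrix]
  rfl

lemma U_eq_permMatrix : U = Equiv.Perm.permMatrix ℂ swap23 := by
  ext p q
  simp only [U, of_apply, PEquiv.toMatrix_apply, Equiv.toPEquiv_apply, Option.mem_def,
    Option.some.injEq]
  exact if_congr swap23.eq_symm_apply rfl rfl

def bellSign : Fin 4 → TwoQ → ℤ :=
  ![fun a => if a = (0,0) then 1 else if a = (1,1) then 1 else 0,
    fun a => if a = (0,0) then 1 else if a = (1,1) then -1 else 0,
    fun a => if a = (0,1) then 1 else if a = (1,0) then 1 else 0,
    fun a => if a = (0,1) then 1 else if a = (1,0) then -1 else 0]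

lemma bell_eq_c2_mul_bellSign (i : Fin 4) (a : TwoQ) : bell i a = c2 * bellSign i a := by
  obtain ⟨a1, a2⟩ := a
  fin_cases i <;> fin_cases a1 <;> fin_cases a2 <;> norm_num [bell, bellSign, tpv, e]

lemma star_c2 : star c2 = c2 := by simp [c2, ← Complex.ofReal_inv]

lemma c2_mul_c2 : c2 * c2 = 1 / 2 := by
  rw [c2, ← mul_inv, ← Complex.ofReal_mul, Real.mul_self_sqrt zero_le_two]
  norm_num

lemma bellProj_apply (i : Fin 4) (a b : TwoQ) :
    bellProj i a b = 1 / 2 * (bellSign i a * bellSign i b : ℤ) := by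
  rw [bellProj, of_apply, bell_eq_c2_mul_bellSign, bell_eq_c2_mul_bellSign, star_mul', star_c2,
    star_intCast, ← c2_mul_c2]
  push_cast
  ring

def smolinSignSum (p q : TwoQ × TwoQ) : ℤ :=
  ∑ i : Fin 4, bellSign i p.1 * bellSign i q.1 * (bellSign i p.2 * bellSign i q.2)

lemma smolin_apply (p q : TwoQ × TwoQ) : smolin p q = 1 / 16 * (smolinSignSum p q : ℂ) := by
  simp only [smolin, Matrix.smul_apply, Matrix.sum_apply, kroneckerMap_apply, bellProj_apply,
    smolinSignSum, smul_eq_mul]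
  push_cast [Finset.mul_sum]
  exact Finset.sum_congr rfl fun i _ => by ring

lemma smolinSignSum_swap23 (p q : TwoQ × TwoQ) :
    smolinSignSum (swap23 p) (swap23 q) = smolinSignSum p q := by
  revert p q
  decide

lemma smolin_submatrix_swap23 : smolin.submatrix swap23 swap23 = smolin := by
  ext p q
  rw [submatrix_apply, smolin_apply, smolin_apply, smolinSignSum_swap23]

/-- `U ρ_S U† = ρ_S`; equivalently, relabelling the tensor factors from the
`A1B1 : A2B2` grouping to the `A1A2 : B1B2` grouping leaves `ρ_S` unchanged. -/
theorem smolin_swap_invariant :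
    U * smolin * Uᴴ = smolin ∧ smolin.submatrix swap23 swap23 = smolin := by
  refine ⟨?_, smolin_submatrix_swap23⟩
  rw [U_eq_permMatrix, permMatrix_mul_mul_conjTranspose_permMatrix, smolin_submatrix_swap23]
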